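/- A topologically finitely generated profinite group has only finitely many open subgroups of index at most N, for every natural number N. -/

import Mathlib

/-!
An open subgroup of a compact group has finite index and, being also closed, is the closure of
its trace on the dense finitely generated subgroup `D = ⟨S⟩`; so it suffices to bound the number
of subgroups of index at most `N` in `D`. A subgroup `H` of index `n` is the stabilizer of a point
for the action of `D` on `D ⧸ H ≃ Fin n`, and there are only finitely many homomorphisms
`D →* Perm (Fin n)`, each being determined by its values on `S`.
-/

open Set

instance MonoidHom.finite_of_fg {Γ P : Type*} [Group Γ] [Group.FG Γ] [Monoid P] [Finite P] :
    Finite (Γ →* P) := by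
  obtain ⟨S, hS, hSfin⟩ := Group.fg_iff.mp ‹Group.FG Γ›
  have : Finite S := hSfin
  refine Finite.of_injective (fun (f : Γ →* P) (s : S) => f s) fun f g hfg => ?_
  exact MonoidHom.eq_of_eqOn_dense hS fun s hs => congrFun hfg ⟨s, hs⟩

namespace Subgroup

variable {Γ : Type*} [Group Γ]

theorem exists_eq_comap_stabilizer (H : Subgroup Γ) [H.FiniteIndex] :
    ∃ (φ : Γ →* Equiv.Perm (Fin H.index)) (p : Fin H.index),
      H = (MulAction.stabilizer (Equiv.Perm (Fin H.index)) p).comap φ := by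
  have : Finite (Γ ⧸ H) := H.finite_quotient_of_finiteIndex
  let e : Γ ⧸ H ≃ Fin H.index := Finite.equivFinOfCardEq H.index_eq_card.symm
  refine ⟨e.permCongrHom.toMonoidHom.comp (MulAction.toPermHom Γ (Γ ⧸ H)), e (1 : Γ), ?_⟩
  ext g
  simp [Equiv.permCongrHom, Equiv.permCongr_apply, QuotientGroup.eq]

theorem finite_setOf_finiteIndex_index_le [Group.FG Γ] (N : ℕ) :
    {H : Subgroup Γ | H.FiniteIndex ∧ H.index ≤ N}.Finite := by
  refine ((finite_Iic N).biUnion fun n _ => finite_range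
    fun x : (Γ →* Equiv.Perm (Fin n)) × Fin n =>
      (MulAction.stabilizer (Equiv.Perm (Fin n)) x.2).comap x.1).subset ?_
  rintro H ⟨hH, hN⟩
  obtain ⟨φ, p, hφp⟩ := H.exists_eq_comap_stabilizer
  exact mem_biUnion (x := H.index) hN ⟨(φ, p), hφp.symm⟩

theorem index_subgroupOf_le (H K : Subgroup Γ) [H.FiniteIndex] :
    (H.subgroupOf K).index ≤ H.index :=
  have hH : H.relIndex ⊤ ≠ 0 := by rw [relIndex_top_right]; exact FiniteIndex.index_ne_zero
  (relIndex_le_of_le_right le_top hH).trans_eq H.relIndex_top_right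

variable {G : Type*} [Group G] [TopologicalSpace G] [SeparatelyContinuousMul G]

theorem eq_closure_inter_of_isOpen {H : Subgroup G} (hH : IsOpen (H : Set G)) {D : Set G}
    (hD : Dense D) : (H : Set G) = _root_.closure (H ∩ D) :=
  (hD.open_subset_closure_inter hH).antisymm
    (closure_minimal inter_subset_left (H.isClosed_of_isOpen hH))

theorem injOn_subgroupOf_of_dense {D : Subgroup G} (hD : Dense (D : Set G)) :
    {H : Subgroup G | IsOpen (H : Set G)}.InjOn (·.subgroupOf D) := by
  intro H₁ hH₁ H₂ hH₂ h
  have hinf : (H₁ : Set G) ∩ (D : Set G) = (H₂ : Set G) ∩ (D : Set G) := by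
    simpa only [coe_inf] using congrArg SetLike.coe (subgroupOf_inj.mp h)
  exact SetLike.coe_injective <| by
    rw [eq_closure_inter_of_isOpen hH₁ hD, eq_closure_inter_of_isOpen hH₂ hD, hinf]

end Subgroup

theorem stmt_4_general (G : Type*) [Group G] [TopologicalSpace G] [IsTopologicalGroup G]
    [CompactSpace G]
    (hfg : ∃ S : Finset G, Dense (Subgroup.closure (S : Set G) : Set G)) (N : ℕ) :
    {H : Subgroup G | IsOpen (H : Set G) ∧ H.index ≤ N}.Finite := by
  obtain ⟨S, hS⟩ := hfg
  refine Set.Finite.of_finite_image ?_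
    ((Subgroup.injOn_subgroupOf_of_dense hS).mono fun H hH => hH.1)
  refine (Subgroup.finite_setOf_finiteIndex_index_le N).subset ?_
  rintro _ ⟨H, ⟨hH, hHN⟩, rfl⟩
  have := Subgroup.quotient_finite_of_isOpen H hH
  have := H.finiteIndex_of_finite_quotient
  exact ⟨inferInstance, (H.index_subgroupOf_le _).trans hHN⟩

/-- A topologically finitely generated profinite group has only finitely many open
subgroups of index at most `N`, for every natural number `N`. -/
theorem stmt_4 (G : Type*) [Group G] [TopologicalSpace G] [IsTopologicalGroup G]
    [CompactSpace G] [T2Space G] [TotallyDisconnectedSpace G]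
    (hfg : ∃ S : Finset G, Dense (Subgroup.closure (S : Set G) : Set G)) (N : ℕ) :
    {H : Subgroup G | IsOpen (H : Set G) ∧ H.index ≤ N}.Finite :=
  stmt_4_general G hfg N
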